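/- Let (X,S) be the S-adic subshift generated by a positive directive sequence τ = (τ_n: 𝒜_{n+1}* → 𝒜_n*)_{n≥0}. Assume that K = liminf_{n→∞} ‖τ_{[0,n]}‖/⟨τ_{[0,n]}⟩ < +∞ (the proportional towers property) and that the sequence (|𝒜_n|)_{n≥0} is bounded. Then liminf_{n→∞} p_X(n)/n < +∞. -/

import Mathlib

open Filter Topology
open scoped ENNReal

section Defs

variable {A B C : Type*}

/-- The shift of a two-sided sequence by `k`. -/
def shiftBy (k : ℤ) (x : ℤ → A) : ℤ → A := fun n => x (n + k)

/-- The finite word `x_m x_{m+1} ⋯ x_{m+len-1}` read in the two-sided sequence `x`. -/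
def factorAt (x : ℤ → A) (m : ℤ) (len : ℕ) : List A :=
  (List.range len).map fun i => x (m + (i : ℤ))

/-- Extension of a morphism (given on letters) to finite words. -/
def wordImage (τ : A → List B) (w : List A) : List B := (w.map τ).flatten

/-- Composition of two morphisms. -/
def morphComp (σ : B → List C) (τ : A → List B) : A → List C :=
  fun a => wordImage σ (τ a)

/-- A morphism is non-erasing if no letter is sent to the empty word. -/
def NonErasing (τ : A → List B) : Prop := ∀ a, τ a ≠ []

/-- A morphism is positive if every target letter occurs in the image of each letter. -/
def PositiveMorph (τ : A → List B) : Prop := ∀ a : A, ∀ b : B, b ∈ τ a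

/-- A morphism is proper if all images start with the same letter and end with the same letter. -/
def ProperMorph (τ : A → List B) : Prop :=
  ∃ b b' : B, ∀ a : A, (τ a).head? = some b ∧ (τ a).getLast? = some b'

/-- Cumulative lengths of the images `τ(y_0 ⋯ y_{n-1})` (or the negative part for `n < 0`). -/
def cumLen (τ : A → List B) (y : ℤ → A) (n : ℤ) : ℤ :=
  if 0 ≤ n then ∑ i ∈ Finset.range n.toNat, ((τ (y (i : ℤ))).length : ℤ)
  else -∑ i ∈ Finset.range (-n).toNat, ((τ (y (-(i : ℤ) - 1))).length : ℤ)

/-- `z` is the two-sided concatenation of the images of the letters of `y` under `τ`,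
the image of the 0-th coordinate starting at coordinate 0. -/
def IsSeqImage (τ : A → List B) (y : ℤ → A) (z : ℤ → B) : Prop :=
  ∀ (n : ℤ) (j : Fin (τ (y n)).length), z (cumLen τ y n + ((j : ℕ) : ℤ)) = (τ (y n)).get j

/-- `(k, y)` is a centered `τ`-representation of `x` in `Y`. -/
def IsCenteredRep (τ : A → List B) (Y : Set (ℤ → A)) (x : ℤ → B) (k : ℕ) (y : ℤ → A) : Prop :=
  y ∈ Y ∧ k < (τ (y 0)).length ∧ ∃ z, IsSeqImage τ y z ∧ x = shiftBy (k : ℤ) z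

/-- `τ` is recognizable in `Y`: every point has at most one centered `τ`-representation in `Y`. -/
def RecognizableIn (τ : A → List B) (Y : Set (ℤ → A)) : Prop :=
  ∀ (x : ℤ → B) (k k' : ℕ) (y y' : ℤ → A),
    IsCenteredRep τ Y x k y → IsCenteredRep τ Y x k' y' → k = k' ∧ y = y'

/-- A two-sided sequence is aperiodic for the shift. -/
def AperiodicPoint (x : ℤ → A) : Prop := ∀ k : ℤ, k ≠ 0 → shiftBy k x ≠ x

/-- `τ` is recognizable in `Y` for aperiodic points. -/
def RecognizableInForAperiodic (τ : A → List B) (Y : Set (ℤ → A)) : Prop :=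
  ∀ (x : ℤ → B) (k k' : ℕ) (y y' : ℤ → A), AperiodicPoint x →
    IsCenteredRep τ Y x k y → IsCenteredRep τ Y x k' y' → k = k' ∧ y = y'

/-- A subshift: a closed shift-invariant subset of `A^ℤ`. -/
def IsSubshift [TopologicalSpace A] (X : Set (ℤ → A)) : Prop :=
  IsClosed X ∧ ∀ k : ℤ, ∀ x ∈ X, shiftBy k x ∈ X

/-- A minimal subshift: nonempty and every orbit is dense in it. -/
def MinimalSubshift [TopologicalSpace A] (X : Set (ℤ → A)) : Prop :=
  IsSubshift X ∧ X.Nonempty ∧ ∀ x ∈ X, X ⊆ closure {z | ∃ k : ℤ, z = shiftBy k x}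

/-- `X` is the smallest subshift containing `τ(Y)`. -/
def IsSmallestSubshiftContaining [TopologicalSpace B] (τ : A → List B)
    (Y : Set (ℤ → A)) (X : Set (ℤ → B)) : Prop :=
  IsSubshift X ∧ (∀ y ∈ Y, ∀ z, IsSeqImage τ y z → z ∈ X) ∧
    ∀ X' : Set (ℤ → B), IsSubshift X' → (∀ y ∈ Y, ∀ z, IsSeqImage τ y z → z ∈ X') → X ⊆ X'

/-- The language of a subshift. -/
def langOf (X : Set (ℤ → A)) : Set (List A) :=
  {w | ∃ x ∈ X, ∃ m : ℤ, factorAt x m w.length = w}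

/-- The complexity function of a subshift. -/
noncomputable def complexity (X : Set (ℤ → A)) (n : ℕ) : ℕ :=
  Set.ncard {w : List A | w.length = n ∧ w ∈ langOf X}

/-- `‖τ‖`, the maximal length of the image of a letter. -/
noncomputable def normSup (τ : A → List B) : ℕ := sSup (Set.range fun a => (τ a).length)

/-- `⟨τ⟩`, the minimal length of the image of a letter. -/
noncomputable def normInf (τ : A → List B) : ℕ := sInf (Set.range fun a => (τ a).length)

/-- The language of `θ(A^ℤ)`: finite words occurring in two-sided images under `θ`. -/
def morphLang (θ : A → List C) : Set (List C) :=
  {w | ∃ (x : ℤ → A) (z : ℤ → C) (m : ℤ), IsSeqImage θ x z ∧ factorAt z m w.length = w}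

/-- `p_{θ(A^ℤ)}(n)`: number of words of length `n` occurring in two-sided images under `θ`. -/
noncomputable def morphComplexity (θ : A → List C) (n : ℕ) : ℕ :=
  Set.ncard {w : List C | w.length = n ∧ w ∈ morphLang θ}

/-- The set `F(b, n, σ, L)` of right extensions of `b` in `L`. -/
def Fset (σ : B → List C) (b : B) (n : ℕ) (L : Set (List B)) : Set (List B) :=
  {w | w ∈ L ∧ (b :: w) ∈ L ∧ w.head? ≠ some b ∧
    (wordImage σ w.dropLast).length < n ∧ n ≤ (wordImage σ w).length}

/-- `τ(A^i)`: images under `τ` of words of length `i`. -/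
def imagesOfLen (τ : A → List B) (i : ℕ) : Set (List B) :=
  {w | ∃ u : List A, u.length = i ∧ wordImage τ u = w}

/-- `Comp_i(σ|τ)(n)`, the `i`-th complexity of `σ` with respect to `τ`. -/
noncomputable def relCompI [Fintype B] (σ : B → List C) (τ : A → List B) (i n : ℕ) : ℕ :=
  ∑ b : B, (Fset σ b n (imagesOfLen τ i)).ncard

/-- `Comp(σ|τ)(n)`, the complexity of `σ` with respect to `τ`. -/
noncomputable def relComp [Fintype B] (σ : B → List C) (τ : A → List B) (n : ℕ) : ℕ :=
  ∑ b : B, (Fset σ b n (morphLang τ)).ncard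

/-- Number of maximal blocks of a single repeated letter in a word. -/
def blockCount [DecidableEq B] : List B → ℕ
  | [] => 0
  | [_] => 1
  | a :: b :: l => (if a = b then 0 else 1) + blockCount (b :: l)

/-- The repetition complexity `r-comp(τ)` of a morphism. -/
noncomputable def rcomp [Fintype A] [DecidableEq B] (τ : A → List B) : ℕ :=
  ∑ a : A, blockCount (τ a)

/-- Two two-sided sequences are left asymptotic. -/
def LeftAsymptotic (x y : ℤ → A) : Prop :=
  ∃ N : ℕ, ∀ k : ℕ, N ≤ k → x (-(k : ℤ)) = y (-(k : ℤ))

/-- The shift orbits of `x` and `y` are asymptotic. -/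
def OrbitsAsymptotic (x y : ℤ → A) : Prop :=
  ∃ k k' : ℤ, LeftAsymptotic (shiftBy k x) (shiftBy k' y)

/-- A finite set `W` of non-empty words is recognizable in the subshift `X`. -/
def WordSetRecognizable [TopologicalSpace B] (W : Set (List B)) (X : Set (ℤ → B)) : Prop :=
  ∃ (A' : Type) (_ : Fintype A') (Y : Set (ℤ → A')) (τ : A' → List B),
    Set.range τ = W ∧ NonErasing τ ∧ (@IsSubshift A' ⊥ Y) ∧
    IsSmallestSubshiftContaining τ Y X ∧ RecognizableIn τ Y

end Defs

section Seq

variable {A : ℕ → Type*}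

/-- `τ_{[0,n]} = τ_0 ∘ τ_1 ∘ ⋯ ∘ τ_n`. -/
def compSeq (τ : ∀ n, A (n+1) → List (A n)) : ∀ n, A (n+1) → List (A 0)
  | 0 => τ 0
  | n+1 => fun a => wordImage (compSeq τ n) (τ (n+1) a)

/-- `τ_{[n, n+k]} = τ_n ∘ ⋯ ∘ τ_{n+k}`. -/
def compFrom (τ : ∀ n, A (n+1) → List (A n)) (n : ℕ) : ∀ k, A (n+k+1) → List (A n)
  | 0 => τ n
  | k+1 => fun a => wordImage (compFrom τ n k) (τ (n+k+1) a)

/-- The S-adic subshift generated by the directive sequence `τ`. -/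
def sadicSubshift (τ : ∀ n, A (n+1) → List (A n)) : Set (ℤ → A 0) :=
  {x | ∀ (m : ℤ) (len : ℕ), ∃ (n : ℕ) (a : A (n+1)), factorAt x m len <:+: compSeq τ n a}

/-- The level-`n` subshift `X_τ^{(n)}` of the directive sequence `τ`. -/
def levelSubshift (τ : ∀ n, A (n+1) → List (A n)) (n : ℕ) : Set (ℤ → A n) :=
  {x | ∀ (m : ℤ) (len : ℕ), ∃ (k : ℕ) (a : A (n+k+1)), factorAt x m len <:+: compFrom τ n k a}

end Seq

/-!
By positivity every word of level `n` occurs inside every word of any higher level,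
so a word of length `L = ⟨τ_{[0,n]}⟩` of the language lies inside the image `τ_{[0,n]}(ab)` of a
two-letter word. It is determined by `a`, `b` and its starting position, which gives
`p_X(L) ≤ M² (2‖τ_{[0,n]}‖ + 1)`. Along the levels where `‖τ_{[0,n]}‖ / ⟨τ_{[0,n]}⟩` stays below
a finite bound `c`, this is at most `M² (2c + 1) L`, and these lengths `L` tend to infinity
unless `X` is empty.
-/

section Morphisms

variable {A B C : Type*}

@[simp]
lemma wordImage_nil (σ : A → List B) : wordImage σ [] = [] := rfl

@[simp]
lemma wordImage_cons (σ : A → List B) (a : A) (u : List A) :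
    wordImage σ (a :: u) = σ a ++ wordImage σ u := by
  simp [wordImage]

lemma wordImage_append (σ : A → List B) (u v : List A) :
    wordImage σ (u ++ v) = wordImage σ u ++ wordImage σ v := by
  simp [wordImage]

lemma wordImage_congr {σ σ' : A → List B} {u : List A} (h : ∀ a ∈ u, σ a = σ' a) :
    wordImage σ u = wordImage σ' u := by
  simp only [wordImage, List.map_congr_left h]

lemma wordImage_wordImage (σ' : B → List C) (σ : A → List B) (u : List A) :
    wordImage σ' (wordImage σ u) = wordImage (morphComp σ' σ) u := by
  induction u with
  | nil => rfl
  | cons a u ih => rw [wordImage_cons, wordImage_append, ih, wordImage_cons, morphComp]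

lemma infix_wordImage_of_mem {σ : A → List B} {u : List A} {a : A} (ha : a ∈ u) :
    σ a <:+: wordImage σ u := by
  obtain ⟨s, t, rfl⟩ := List.append_of_mem ha
  exact ⟨wordImage σ s, wordImage σ t, by simp [wordImage_append]⟩

lemma mem_wordImage_of_mem {σ : A → List B} {u : List A} {a : A} {b : B}
    (ha : a ∈ u) (hb : b ∈ σ a) : b ∈ wordImage σ u :=
  (infix_wordImage_of_mem ha).subset hb

lemma length_le_normSup [Finite A] (σ : A → List B) (a : A) :
    (σ a).length ≤ normSup σ :=
  le_csSup (Set.finite_range _).bddAbove ⟨a, rfl⟩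

lemma normInf_le_length (σ : A → List B) (a : A) : normInf σ ≤ (σ a).length :=
  Nat.sInf_le ⟨a, rfl⟩

lemma le_normInf [Nonempty A] {σ : A → List B} {k : ℕ} (h : ∀ a, k ≤ (σ a).length) :
    k ≤ normInf σ :=
  le_csInf (Set.range_nonempty _) (Set.forall_mem_range.2 h)

lemma exists_infix_append_of_infix_wordImage {σ : B → List C} {w : List C} (hw : w ≠ [])
    (hL : ∀ b, w.length ≤ (σ b).length) :
    ∀ u : List B, w <:+: wordImage σ u → ∃ a b, w <:+: σ a ++ σ b
  | [], h => absurd (List.infix_nil.1 h) hw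
  | [a], h => ⟨a, a, h.trans (by simpa using (List.prefix_append (σ a) (σ a)).isInfix)⟩
  | a :: b :: u, ⟨s, t, hst⟩ => by
    rw [wordImage_cons] at hst
    by_cases hs : (σ a).length ≤ s.length
    · refine exists_infix_append_of_infix_wordImage hw hL (b :: u)
        ⟨s.drop (σ a).length, t, ?_⟩
      have := congrArg (List.drop (σ a).length) hst
      rwa [List.append_assoc, List.drop_append_of_le_length hs, List.drop_left,
        ← List.append_assoc] at this
    · refine ⟨a, b, (List.suffix_append s w).isInfix.trans (List.IsPrefix.isInfix ?_)⟩
      -- `w` starts inside `σ a` and is no longer than `σ b`, so it ends inside `σ a ++ σ b`.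
      have hpre : s ++ w <+: σ a ++ wordImage σ (b :: u) := ⟨t, hst⟩
      have hlen : (s ++ w).length ≤ (σ a ++ σ b).length := by
        simp only [List.length_append]
        linarith [hL b]
      rw [List.prefix_iff_eq_take.1 hpre, wordImage_cons, ← List.append_assoc,
        List.take_append_of_le_length (by simpa using hlen)]
      exact List.take_prefix _ _

/-- A word of length `L` inside `σ a ++ σ b` is determined by `a`, `b` and its starting position,
which is at most `2 ‖σ‖`. -/
lemma ncard_le_of_forall_infix_append [Fintype B] (σ : B → List C) {L : ℕ} {T : Set (List C)}
    (hT : ∀ w ∈ T, w.length = L ∧ ∃ a b, w <:+: σ a ++ σ b) :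
    T.ncard ≤ Fintype.card B ^ 2 * (2 * normSup σ + 1) := by
  let window : B × B × Fin (2 * normSup σ + 1) → List C :=
    fun p => ((σ p.1 ++ σ p.2.1).drop p.2.2).take L
  have hsub : T ⊆ Set.range window := by
    intro w hw
    obtain ⟨hlen, a, b, s, t, hst⟩ := hT w hw
    have hpos : s.length < 2 * normSup σ + 1 := by
      have := congrArg List.length hst
      simp only [List.length_append] at this
      linarith [length_le_normSup σ a, length_le_normSup σ b]
    refine ⟨⟨a, b, ⟨s.length, hpos⟩⟩, ?_⟩
    simp only [window, ← hst, List.append_assoc, List.drop_left, ← hlen, List.take_left]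
  calc T.ncard ≤ (Set.range window).ncard := Set.ncard_le_ncard hsub (Set.finite_range _)
    _ ≤ Nat.card (B × B × Fin (2 * normSup σ + 1)) := by
      rw [← Set.image_univ, ← Set.ncard_univ]
      exact Set.ncard_image_le Set.finite_univ
    _ = Fintype.card B ^ 2 * (2 * normSup σ + 1) := by
      simp [Nat.card_eq_fintype_card, sq, mul_assoc]

end Morphisms

@[simp]
lemma length_factorAt {A : Type*} (x : ℤ → A) (m : ℤ) (len : ℕ) :
    (factorAt x m len).length = len := by
  simp [factorAt]

section Directive

variable {A : ℕ → Type*} (τ : ∀ n, A (n+1) → List (A n))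

lemma compSeq_add_eq_wordImage (n k : ℕ) (a : A (n+1+k+1)) :
    compSeq τ (n+1+k) a = wordImage (compSeq τ n) (compFrom τ (n+1) k a) := by
  induction k with
  | zero => rfl
  | succ k ih =>
    change wordImage (compSeq τ (n+1+k)) (τ (n+1+k+1) a) = _
    rw [compFrom, wordImage_wordImage]
    exact wordImage_congr fun b _ => ih b

lemma exists_compSeq_eq_wordImage {n m : ℕ} (h : n < m) (b : A (m+1)) :
    ∃ u : List (A (n+1)), compSeq τ m b = wordImage (compSeq τ n) u := by
  obtain ⟨k, rfl⟩ : ∃ k, m = n+1+k := ⟨m - (n+1), by omega⟩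
  exact ⟨_, compSeq_add_eq_wordImage τ n k b⟩

variable {τ}

lemma mem_compFrom (hne : ∀ n, NonErasing (τ n)) (hpos : ∀ n, 1 ≤ n → PositiveMorph (τ n))
    (n k : ℕ) (b : A (n+1+k+1)) (a : A (n+1)) : a ∈ compFrom τ (n+1) k b := by
  induction k with
  | zero => exact hpos (n+1) (by omega) b a
  | succ k ih =>
    obtain ⟨c, hc⟩ := List.exists_mem_of_ne_nil _ (hne (n+1+k+1) b)
    exact mem_wordImage_of_mem hc (ih c)

lemma compSeq_infix_compSeq (hne : ∀ n, NonErasing (τ n))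
    (hpos : ∀ n, 1 ≤ n → PositiveMorph (τ n)) {n m : ℕ} (h : n < m)
    (a : A (n+1)) (b : A (m+1)) : compSeq τ n a <:+: compSeq τ m b := by
  obtain ⟨k, rfl⟩ : ∃ k, m = n+1+k := ⟨m - (n+1), by omega⟩
  rw [compSeq_add_eq_wordImage]
  exact infix_wordImage_of_mem (mem_compFrom hne hpos n k b a)

lemma nonempty_of_le (hne : ∀ n, NonErasing (τ n)) {n m : ℕ} (h : n ≤ m) :
    Nonempty (A m) → Nonempty (A n) := by
  obtain ⟨k, rfl⟩ := Nat.exists_eq_add_of_le h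
  induction k with
  | zero => exact id
  | succ k ih =>
    rintro ⟨a⟩
    obtain ⟨b, -⟩ := List.exists_mem_of_ne_nil _ (hne (n+k) a)
    exact ih (by omega) ⟨b⟩

lemma exists_infix_compSeq_of_mem_langOf {w : List (A 0)}
    (hw : w ∈ langOf (sadicSubshift τ)) : ∃ n a, w <:+: compSeq τ n a := by
  obtain ⟨x, hx, m, hxw⟩ := hw
  rw [← hxw]
  exact hx m w.length

/-- Otherwise the words of the language would be no
longer than the images of the finitely many levels below `N`. -/
lemma nonempty_of_sadicSubshift_nonempty (hne : ∀ n, NonErasing (τ n))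
    [∀ n, Finite (A n)] (hX : (sadicSubshift τ).Nonempty) (N : ℕ) : Nonempty (A N) := by
  by_contra hN
  obtain ⟨x, hx⟩ := hX
  let bound := ∑ n ∈ Finset.range N, normSup (compSeq τ n)
  obtain ⟨n, a, hinf⟩ := hx 0 (bound + 1)
  have hnN : n < N := by
    by_contra! hle
    exact hN (nonempty_of_le hne (by omega : N ≤ n+1) ⟨a⟩)
  have := hinf.length_le
  rw [length_factorAt] at this
  have hle : normSup (compSeq τ n) ≤ bound :=
    Finset.single_le_sum (fun k _ => Nat.zero_le (normSup (compSeq τ k))) (Finset.mem_range.2 hnN)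
  linarith [length_le_normSup (compSeq τ n) a]

lemma tendsto_normInf_compSeq (hne : ∀ n, NonErasing (τ n))
    (hpos : ∀ n, 1 ≤ n → PositiveMorph (τ n)) [∀ n, Nonempty (A n)]
    (hX : (sadicSubshift τ).Nonempty) :
    Tendsto (fun n => normInf (compSeq τ n)) atTop atTop := by
  obtain ⟨x, hx⟩ := hX
  refine tendsto_atTop_atTop.2 fun len => ?_
  obtain ⟨m, a, hinf⟩ := hx 0 len
  refine ⟨m + 1, fun n hn => le_normInf fun b => ?_⟩
  calc len = (factorAt x 0 len).length := (length_factorAt x 0 len).symm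
    _ ≤ (compSeq τ n b).length :=
      (hinf.trans (compSeq_infix_compSeq hne hpos (by omega) a b)).length_le

lemma exists_infix_compSeq_append (hne : ∀ n, NonErasing (τ n))
    (hpos : ∀ n, 1 ≤ n → PositiveMorph (τ n)) [∀ n, Nonempty (A n)] {n : ℕ} {w : List (A 0)}
    (hw : w ∈ langOf (sadicSubshift τ)) (hw0 : w ≠ [])
    (hlen : w.length ≤ normInf (compSeq τ n)) :
    ∃ a b, w <:+: compSeq τ n a ++ compSeq τ n b := by
  obtain ⟨k, a, hinf⟩ := exists_infix_compSeq_of_mem_langOf hw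
  let b : A (max k n + 1 + 1) := Classical.arbitrary _
  obtain ⟨u, hu⟩ := exists_compSeq_eq_wordImage τ (by omega : n < max k n + 1) b
  refine exists_infix_append_of_infix_wordImage hw0
    (fun c => hlen.trans (normInf_le_length _ c)) u ?_
  rw [← hu]
  exact hinf.trans (compSeq_infix_compSeq hne hpos (by omega) a b)

lemma complexity_sadicSubshift_normInf_le (hne : ∀ n, NonErasing (τ n))
    (hpos : ∀ n, 1 ≤ n → PositiveMorph (τ n)) [∀ n, Fintype (A n)] [∀ n, Nonempty (A n)]
    {n : ℕ} (hL : 1 ≤ normInf (compSeq τ n)) :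
    complexity (sadicSubshift τ) (normInf (compSeq τ n)) ≤
      Fintype.card (A (n+1)) ^ 2 * (2 * normSup (compSeq τ n) + 1) := by
  refine ncard_le_of_forall_infix_append _ fun w ⟨hlen, hw⟩ => ⟨hlen, ?_⟩
  exact exists_infix_compSeq_append hne hpos hw (List.ne_nil_of_length_pos (by omega)) hlen.le

end Directive

lemma complexity_empty {A : Type*} (n : ℕ) : complexity (∅ : Set (ℤ → A)) n = 0 := by
  simp [complexity, langOf]

lemma ENNReal.natCast_div_le_of_le_mul_two_mul_add_one {p K S L : ℕ} {c : ℝ≥0∞}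
    (hp : p ≤ K * (2 * S + 1)) (hL : 1 ≤ L) (hS : (S : ℝ≥0∞) / L < c) :
    (p : ℝ≥0∞) / L ≤ K * (2 * c + 1) := by
  have hL0 : (L : ℝ≥0∞) ≠ 0 := by exact_mod_cast (by omega : L ≠ 0)
  rw [ENNReal.div_lt_iff (Or.inl hL0) (Or.inl (ENNReal.natCast_ne_top L))] at hS
  rw [ENNReal.div_le_iff hL0 (ENNReal.natCast_ne_top L)]
  calc (p : ℝ≥0∞) ≤ K * (2 * S + 1) := by exact_mod_cast hp
    _ ≤ K * (2 * (c * L) + L) := by gcongr; exact_mod_cast hL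
    _ = K * (2 * c + 1) * L := by ring

/-- an S-adic subshift with proportional towers and bounded alphabets has
non-superlinear complexity (Corollary `cor:proptowersimplynonsup`). -/
theorem stmt14 {A : ℕ → Type} [∀ n, Fintype (A n)]
    (τ : ∀ n, A (n+1) → List (A n)) (hne : ∀ n, NonErasing (τ n))
    (hpos : ∀ n, 1 ≤ n → PositiveMorph (τ n))
    (hK : Filter.liminf
        (fun n => (normSup (compSeq τ n) : ℝ≥0∞) / (normInf (compSeq τ n) : ℝ≥0∞))
        Filter.atTop < ⊤)
    (hbd : ∃ M : ℕ, ∀ n, Fintype.card (A n) ≤ M) :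
    Filter.liminf
      (fun n : ℕ => (complexity (sadicSubshift τ) n : ℝ≥0∞) / (n : ℝ≥0∞))
      Filter.atTop < ⊤ := by
  obtain ⟨M, hM⟩ := hbd
  rcases (sadicSubshift τ).eq_empty_or_nonempty with hX | hX
  · simp [hX, complexity_empty]
  have := nonempty_of_sadicSubshift_nonempty hne hX
  have hL := tendsto_normInf_compSeq hne hpos hX
  obtain ⟨c, hKc, hc⟩ := exists_between hK
  have hgood := (frequently_lt_of_liminf_lt (by isBoundedDefault) hKc).and_eventually
    (hL.eventually_ge_atTop 1)
  have hbound : ∃ᶠ L in atTop,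
      (complexity (sadicSubshift τ) L : ℝ≥0∞) / L ≤ ((M ^ 2 : ℕ) : ℝ≥0∞) * (2 * c + 1) := by
    refine hL.frequently_map _ (fun n ⟨hratio, hn⟩ => ?_) hgood
    refine ENNReal.natCast_div_le_of_le_mul_two_mul_add_one ?_ hn hratio
    exact (complexity_sadicSubshift_normInf_le hne hpos hn).trans
      (Nat.mul_le_mul_right _ (Nat.pow_le_pow_left (hM _) 2))
  exact (liminf_le_of_frequently_le' hbound).trans_lt (by finiteness)
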